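/- arXiv:1107.5745 — 3 statements merged into one kernel-verified Lean document; each statement's English description precedes it below -/
import Mathlib

section
/- Let C be a category with finite colimits and let P : Cᵒᵖ ⥤ Type be an ind-object of C. Then there exist a small partial order L that is a join-semilattice (any two elements have a least upper bound) in which the strict order relation < is well-founded (equivalently, every strictly descending chain in L is finite), together with a functor E : L ⥤ C (regarding L as a category with a unique morphism x → y whenever x ≤ y), such that P is isomorphic to the colimit of E ⋙ yoneda. In particular, every ind-object of a finitely cocomplete category can be presented by a diagram indexed by such a semilattice (note that a join-semilattice, viewed as a category, is filtered). -/
/-!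
By Deligne's theorem (SGA 4 I 8.1.6) a small filtered category `J` receives a final functor
from a directed poset `α`. The lattice `Finset α` in turn maps monotonically and cofinally to
`α`: define `f s` by recursion on `s`, as an upper bound of `s` together with the values `f t`
on the proper subsets `t ⊂ s`. Restricting a filtered diagram along the composite final functor
`Finset α ⥤ α ⥤ J` does not change its colimit.
-/

open CategoryTheory CategoryTheory.Limits

universe v u

theorem Finset.exists_monotone_forall_le_apply {α : Type*} [Preorder α] [IsDirectedOrder α]
    [Nonempty α] : ∃ f : Finset α → α, Monotone f ∧ ∀ s, ∀ a ∈ s, a ≤ f s := by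
  classical
  choose ub hub using fun s : Finset α => s.exists_le
  let f : Finset α → α := strongInduction fun s rec =>
    ub (s ∪ s.ssubsets.attach.image fun t => rec t.1 (mem_ssubsets.1 t.property))
  have hf (s : Finset α) : f s = ub (s ∪ s.ssubsets.attach.image fun t => f t.1) :=
    strongInduction_eq _ s
  have le_of_ssubset {t s : Finset α} (h : t ⊂ s) : f t ≤ f s := by
    rw [hf s]
    refine hub _ _ (mem_union_right _ (mem_image.2 ⟨⟨t, ?_⟩, mem_attach _ _, rfl⟩))
    exact mem_ssubsets.2 h
  refine ⟨f, fun t s h => ?_, fun s a ha => ?_⟩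
  · obtain rfl | hts := eq_or_ssubset_of_subset h
    exacts [le_rfl, le_of_ssubset hts]
  · rw [hf s]
    exact hub _ _ (mem_union_left _ ha)

theorem Monotone.final_functor_of_forall_exists_le {α β : Type*} [Preorder α]
    [IsDirectedOrder α] [Preorder β] {f : α → β} (hf : Monotone f) (h : ∀ b, ∃ a, b ≤ f a) :
    hf.functor.Final :=
  Functor.final_of_exists_of_isFiltered _ (fun b => (h b).imp fun _ hb => ⟨homOfLE hb⟩)
    (fun _ _ => ⟨_, 𝟙 _, Subsingleton.elim _ _⟩)

theorem CategoryTheory.IsFiltered.exists_wellFounded_semilatticeSup (J : Type v)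
    [SmallCategory J] [IsFiltered J] :
    ∃ (L : Type v) (_ : SemilatticeSup L) (_ : WellFoundedLT L) (F : L ⥤ J), F.Final := by
  classical
  obtain ⟨α, _, _, _, F, _⟩ := IsFiltered.exists_directed J
  obtain ⟨f, hf, hle⟩ := Finset.exists_monotone_forall_le_apply (α := α)
  have := hf.final_functor_of_forall_exists_le fun a =>
    ⟨{a}, hle _ _ (Finset.mem_singleton_self a)⟩
  exact ⟨Finset α, inferInstance, inferInstance, hf.functor ⋙ F, inferInstance⟩

theorem indObject_presented_by_wellFounded_semilattice_general
    {C : Type u} [Category.{v} C]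
    (P : Cᵒᵖ ⥤ Type v)
    (hP : ∃ (J : Type v) (_ : SmallCategory J) (_ : IsFiltered J) (D : J ⥤ C),
      Nonempty (P ≅ colimit (D ⋙ yoneda))) :
    ∃ (L : Type v) (_ : SemilatticeSup L) (_ : WellFoundedLT L) (E : L ⥤ C),
      Nonempty (P ≅ colimit (E ⋙ yoneda)) := by
  obtain ⟨J, _, _, D, ⟨e⟩⟩ := hP
  obtain ⟨L, _, _, F, _⟩ := IsFiltered.exists_wellFounded_semilatticeSup J
  exact ⟨L, inferInstance, inferInstance, F ⋙ D,
    ⟨e ≪≫ (Functor.Final.colimitIso F (D ⋙ yoneda)).symm⟩⟩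

/-- Every ind-object of a category with finite colimits can be presented
by a diagram indexed by a small join-semilattice whose strict order is well-founded
(equivalently, in which every strictly descending chain is finite). -/
theorem indObject_presented_by_wellFounded_semilattice
    {C : Type u} [Category.{v} C] [HasFiniteColimits C]
    (P : Cᵒᵖ ⥤ Type v)
    (hP : ∃ (J : Type v) (_ : SmallCategory J) (_ : IsFiltered J) (D : J ⥤ C),
      Nonempty (P ≅ colimit (D ⋙ yoneda))) :
    ∃ (L : Type v) (_ : SemilatticeSup L) (_ : WellFoundedLT L) (E : L ⥤ C),
      Nonempty (P ≅ colimit (E ⋙ yoneda)) :=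
  indObject_presented_by_wellFounded_semilattice_general P hP
end

section
/- Let C be a small monoidal category and let P, Q : Cᵒᵖ ⥤ Type be presheaves that are ind-objects of C. Then the Day convolution P ⊛ Q (the presheaf given by the coend (P ⊛ Q)(c) = ∫^{(a,b) ∈ C×C} P(a) × Q(b) × Hom_C(c, a ⊗ b); equivalently, the value at (P,Q) of the left Kan extension of (a,b) ↦ yoneda(a ⊗ b) along yoneda × yoneda) is again an ind-object of C. More precisely, if P ≅ colim_{i∈I} yoneda(X(i)) and Q ≅ colim_{j∈J} yoneda(Y(j)) with I and J small filtered categories, then P ⊛ Q ≅ colim_{(i,j)∈I×J} yoneda(X(i) ⊗ Y(j)), and I × J is filtered. -/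
/-!
A presheaf `P ≅ colim_i yoneda (X i)` comes with the functor `i ↦ (X i, yoneda (X i) ⟶ P)` into
its category of elements, and this functor is final (Kashiwara–Schapira, Prop. 2.6.3). The product
of two final functors is final, so the colimit defining a left Kan extension along
`yoneda × yoneda` at `(P, Q)` may be computed over `I × J` instead; for the Kan extension of
`(a, b) ↦ yoneda (a ⊗ b)` this yields `colim_{(i,j)} yoneda (X i ⊗ Y j)`, and `I × J` is filtered
when `I` and `J` are.
-/

open CategoryTheory CategoryTheory.Limits MonoidalCategory

universe v

variable {C : Type v} [SmallCategory C] [MonoidalCategory C]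

/-- The Day convolution `P ⊛ Q` of two presheaves on a small monoidal category `C`:
the value at `(P, Q)` of the (pointwise) left Kan extension of the functor
`(a, b) ↦ yoneda (a ⊗ b)` along `yoneda × yoneda`; equivalently, the presheaf given by
the coend `(P ⊛ Q)(c) = ∫^{(a,b)} P(a) × Q(b) × Hom_C(c, a ⊗ b)`. -/
noncomputable def dayConvolution (P Q : Cᵒᵖ ⥤ Type v) : Cᵒᵖ ⥤ Type v :=
  colimit (CostructuredArrow.proj (yoneda.prod yoneda) (P, Q) ⋙
    (MonoidalCategory.tensor C ⋙ yoneda))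

section

universe u₁ u₂ u₃ v₁ v₃

variable {A : Type u₁} [Category.{v₁} A] {B : Type u₂} [Category.{v₁} B]
  {E : Type u₃} [Category.{v₃} E]
  {I J : Type v₁} [SmallCategory I] [SmallCategory J] {X : I ⥤ A} {Y : J ⥤ B}

def prodToCostructuredArrowYonedaProd (cX : Cocone (X ⋙ yoneda)) (cY : Cocone (Y ⋙ yoneda)) :
    I × J ⥤ CostructuredArrow (yoneda.prod yoneda) (cX.pt, cY.pt) :=
  ((cX.toCostructuredArrow ⋙ CostructuredArrow.pre X yoneda cX.pt).prod
      (cY.toCostructuredArrow ⋙ CostructuredArrow.pre Y yoneda cY.pt)) ⋙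
    (CostructuredArrow.prodEquivalence yoneda yoneda cX.pt cY.pt).inverse

theorem final_prodToCostructuredArrowYonedaProd {cX : Cocone (X ⋙ yoneda)}
    {cY : Cocone (Y ⋙ yoneda)} (hX : IsColimit cX) (hY : IsColimit cY) :
    (prodToCostructuredArrowYonedaProd cX cY).Final := by
  have := Presheaf.final_toCostructuredArrow_comp_pre X hX
  have := Presheaf.final_toCostructuredArrow_comp_pre Y hY
  exact Functor.final_comp _ _

noncomputable def colimitProjYonedaProdIso {P : Aᵒᵖ ⥤ Type v₁} {Q : Bᵒᵖ ⥤ Type v₁}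
    (hP : P ≅ colimit (X ⋙ yoneda)) (hQ : Q ≅ colimit (Y ⋙ yoneda)) (F : A × B ⥤ E)
    [HasColimit (CostructuredArrow.proj (yoneda.prod yoneda) (P, Q) ⋙ F)]
    [HasColimit (X.prod Y ⋙ F)] :
    colimit (CostructuredArrow.proj (yoneda.prod yoneda) (P, Q) ⋙ F) ≅ colimit (X.prod Y ⋙ F) :=
  let cP := (colimit.cocone (X ⋙ yoneda)).extend hP.inv
  let cQ := (colimit.cocone (Y ⋙ yoneda)).extend hQ.inv
  have := final_prodToCostructuredArrowYonedaProd (cX := cP) (cY := cQ)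
    ((colimit.isColimit _).extendIso hP.inv) ((colimit.isColimit _).extendIso hQ.inv)
  (Functor.Final.colimitIso (prodToCostructuredArrowYonedaProd cP cQ) _).symm ≪≫
    HasColimit.isoOfNatIso (Iso.refl _)

end

/-- The Day convolution of two ind-objects of a small monoidal category is
again an ind-object: if `P ≅ colim_I yoneda (X i)` and `Q ≅ colim_J yoneda (Y j)` with `I`,
`J` small and filtered, then `I × J` is filtered,
`P ⊛ Q ≅ colim_{(i,j) ∈ I × J} yoneda (X i ⊗ Y j)`, and in particular `P ⊛ Q` is an
ind-object of `C`. -/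
theorem dayConvolution_isIndObject
    (P Q : Cᵒᵖ ⥤ Type v)
    (I : Type v) [SmallCategory I] [IsFiltered I] (X : I ⥤ C)
    (hP : P ≅ colimit (X ⋙ yoneda))
    (J : Type v) [SmallCategory J] [IsFiltered J] (Y : J ⥤ C)
    (hQ : Q ≅ colimit (Y ⋙ yoneda)) :
    IsFiltered (I × J) ∧
    Nonempty (dayConvolution P Q ≅
      colimit ((X.prod Y ⋙ MonoidalCategory.tensor C) ⋙ yoneda)) ∧
    ∃ (K : Type v) (_ : SmallCategory K) (_ : IsFiltered K) (D : K ⥤ C),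
      Nonempty (dayConvolution P Q ≅ colimit (D ⋙ yoneda)) := by
  have e : dayConvolution P Q ≅ colimit ((X.prod Y ⋙ tensor C) ⋙ yoneda) :=
    colimitProjYonedaProdIso hP hQ (tensor C ⋙ yoneda)
  exact ⟨inferInstance, ⟨e⟩, I × J, inferInstance, inferInstance, X.prod Y ⋙ tensor C, ⟨e⟩⟩
end

section
/- Let l be a commutative ring and let A be a nontrivial commutative ring with no zero divisors (an integral domain). For i ∈ l let δ_i : l → A denote the family with (δ_i)_j = 1 if j = i and (δ_i)_j = 0 otherwise. Then every complete orthogonal idempotent l-family in A equals δ_{i₀} for a unique i₀ ∈ l; hence the map i ↦ δ_i is a bijection from l onto the set of complete orthogonal idempotent l-families in A. Moreover this bijection transports the ring structure of l to the convolution operations: δ_i ∗₊ δ_{i'} = δ_{i+i'} and δ_i ∗× δ_{i'} = δ_{i·i'}, where (a ∗₊ b)_m = ∑_{i+j=m} a_i b_j and (a ∗× b)_m = ∑_{i·j=m} a_i b_j. -/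
/-- A complete orthogonal idempotent `l`-family in a commutative ring `A`: a finitely
supported function `a : l → A` with `∑ᵢ aᵢ = 1` and `aᵢ · aⱼ = 0` for `i ≠ j`. -/
def IsCompleteOrthogonalIdempotentFamily {l A : Type*} [CommRing A] (a : l → A) : Prop :=
  (Function.support a).Finite ∧ (∑ᶠ i, a i) = 1 ∧ ∀ i j, i ≠ j → a i * a j = 0

/-- The family `δ_i`, with `(δ_i)_j = 1` if `j = i` and `0` otherwise. -/
def deltaFamily (l A : Type*) [DecidableEq l] [Zero A] [One A] (i : l) : l → A :=
  fun j => if j = i then 1 else 0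

/-!
Multiplying `∑ⱼ aⱼ = 1` by `aᵢ` and using orthogonality shows that every `aᵢ` is idempotent.
In a domain an idempotent is `0` or `1`, and not all `aᵢ` vanish since they sum to `1`; once
`aᵢ₀ = 1`, orthogonality gives `aⱼ = aᵢ₀ aⱼ = 0` for `j ≠ i₀`, so `a = δ_{i₀}`. The convolution
identities hold over any ring: only the term `x = i`, `y = i'` of the double sum survives.
-/

section deltaFamily

variable {l A : Type*} [DecidableEq l]

@[simp]
theorem deltaFamily_self [Zero A] [One A] (i : l) : deltaFamily l A i i = 1 :=
  if_pos rfl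

theorem deltaFamily_of_ne [Zero A] [One A] {i j : l} (h : j ≠ i) : deltaFamily l A i j = 0 :=
  if_neg h

theorem deltaFamily_injective [Zero A] [One A] [NeZero (1 : A)] :
    Function.Injective (deltaFamily l A) := by
  intro i j hij
  by_contra hne
  have h := congrFun hij i
  rw [deltaFamily_self, deltaFamily_of_ne hne] at h
  exact one_ne_zero h

theorem isCompleteOrthogonalIdempotentFamily_deltaFamily [CommRing A] (i : l) :
    IsCompleteOrthogonalIdempotentFamily (deltaFamily l A i) := by
  refine ⟨(Set.finite_singleton i).subset fun j hj => ?_, ?_, fun j k hjk => ?_⟩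
  · by_contra hji
    exact hj (deltaFamily_of_ne hji)
  · rw [finsum_eq_single _ i fun j hj => deltaFamily_of_ne hj, deltaFamily_self]
  · rcases eq_or_ne j i with rfl | hj
    · rw [deltaFamily_of_ne hjk.symm, mul_zero]
    · rw [deltaFamily_of_ne hj, zero_mul]

theorem finsum_deltaFamily_mul_deltaFamily [NonAssocSemiring A] (f : l → l → l) (i i' m : l) :
    (∑ᶠ (x : l) (y : l) (_ : f x y = m), deltaFamily l A i x * deltaFamily l A i' y) =
      deltaFamily l A (f i i') m := by
  rw [finsum_eq_single _ i fun x hx => by simp [deltaFamily_of_ne hx],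
    finsum_eq_single _ i' fun y hy => by simp [deltaFamily_of_ne hy]]
  rw [deltaFamily_self, deltaFamily_self, mul_one, finsum_eq_if]
  exact if_congr eq_comm rfl rfl

end deltaFamily

namespace IsCompleteOrthogonalIdempotentFamily

variable {l A : Type*} [CommRing A] {a : l → A}

theorem isIdempotentElem (ha : IsCompleteOrthogonalIdempotentFamily a) (i : l) :
    IsIdempotentElem (a i) := by
  obtain ⟨hfin, hsum, horth⟩ := ha
  calc a i * a i = ∑ᶠ j, a i * a j :=
        (finsum_eq_single _ i fun j hj => horth i j hj.symm).symm
    _ = a i * ∑ᶠ j, a j := (mul_finsum' _ _ hfin).symm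
    _ = a i := by rw [hsum, mul_one]

theorem exists_ne_zero [Nontrivial A] (ha : IsCompleteOrthogonalIdempotentFamily a) :
    ∃ i, a i ≠ 0 := by
  by_contra! h
  have hsum := ha.2.1
  rw [finsum_eq_zero_of_forall_eq_zero h] at hsum
  exact zero_ne_one hsum

theorem eq_deltaFamily_of_eq_one [DecidableEq l] (ha : IsCompleteOrthogonalIdempotentFamily a)
    {i : l} (hi : a i = 1) : a = deltaFamily l A i := by
  funext j
  rcases eq_or_ne j i with rfl | hj
  · rw [hi, deltaFamily_self]
  · rw [deltaFamily_of_ne hj, ← one_mul (a j), ← hi, ha.2.2 i j hj.symm]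

theorem exists_eq_deltaFamily [IsDomain A] [DecidableEq l]
    (ha : IsCompleteOrthogonalIdempotentFamily a) : ∃ i, a = deltaFamily l A i := by
  obtain ⟨i, hi⟩ := ha.exists_ne_zero
  exact ⟨i, ha.eq_deltaFamily_of_eq_one
    ((IsIdempotentElem.iff_eq_zero_or_one.mp (ha.isIdempotentElem i)).resolve_left hi)⟩

end IsCompleteOrthogonalIdempotentFamily

/-- If `A` is an integral domain, then every complete orthogonal
idempotent `l`-family in `A` is `δ_{i₀}` for a unique `i₀ ∈ l`; hence `i ↦ δ_i` is a
bijection from `l` onto the set of complete orthogonal idempotent `l`-families in `A`, and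
this bijection transports the ring structure of `l` to the additive and multiplicative
convolutions: `δ_i ∗₊ δ_{i'} = δ_{i+i'}` and `δ_i ∗× δ_{i'} = δ_{i·i'}`. -/
theorem completeOrthogonalIdempotentFamily_domain
    {l A : Type*} [CommRing l] [DecidableEq l] [CommRing A] [IsDomain A] :
    (∀ a : l → A, IsCompleteOrthogonalIdempotentFamily a →
        ∃! i₀ : l, a = deltaFamily l A i₀) ∧
    (∀ i : l, IsCompleteOrthogonalIdempotentFamily (deltaFamily l A i)) ∧
    Function.Injective (deltaFamily l A) ∧
    (∀ i i' : l,
      (fun m : l => ∑ᶠ (x : l) (y : l) (_ : x + y = m),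
          deltaFamily l A i x * deltaFamily l A i' y) = deltaFamily l A (i + i')) ∧
    (∀ i i' : l,
      (fun m : l => ∑ᶠ (x : l) (y : l) (_ : x * y = m),
          deltaFamily l A i x * deltaFamily l A i' y) = deltaFamily l A (i * i')) := by
  refine ⟨fun a ha => ?_, isCompleteOrthogonalIdempotentFamily_deltaFamily, deltaFamily_injective,
    fun i i' => funext (finsum_deltaFamily_mul_deltaFamily _ i i'),
    fun i i' => funext (finsum_deltaFamily_mul_deltaFamily _ i i')⟩
  obtain ⟨i₀, rfl⟩ := ha.exists_eq_deltaFamily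
  exact ⟨i₀, rfl, fun j hj => deltaFamily_injective hj.symm⟩
end
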